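/- arXiv:2111.03008 — 2 statements merged into one kernel-verified Lean document; each statement's English description precedes it below -/
import Mathlib

section
/- Let Γ be a fine hyperbolic graph, let Y be a connected subgraph whose vertex set is convex in the combinatorial metric on the 1-skeleton, and let v be a vertex of Γ at distance D = min{d(z,v) : z a vertex of Y} from Y. Then the set M = {z ∈ V(Y) : d(z,v) = D} of vertices of Y realizing the minimal distance is finite. -/
/-!
Fineness bounds the number of paths of bounded length between two vertices `x` and `y`: if
`w₁` and `w` are first steps of two such paths, bypassing the walk `w ⟶ y ⟶ w₁` and closing it
up at `x` gives a short cycle through the edge `x w₁` whose second vertex is `w`, so there are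
finitely many first steps, and one inducts on the length.

Any two closest points `z₀, z ∈ Y` to `v` are within `2δ + 1` of each other: the midpoint `m` of
a geodesic from `z₀` to `z` lies in `Y` by convexity, so `d(m, v) ≥ D`, and the four-point
condition for `z₀, z, m, v` gives `⌊d(z₀, z) / 2⌋ ≤ δ`. Every closest point `z` then lies on the
path made of a geodesic from `z₀` to `z` (inside `Y`) followed by a geodesic from `z` to `v`
(outside `Y` after `z`), and these paths have length at most `2δ + 1 + D`.
-/

/-- A graph is *fine* if for every edge and every `n`, only finitely many circuits
(embedded cycles) of length at most `n` pass through that edge. -/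
def SimpleGraph.IsFine {V : Type*} (Γ : SimpleGraph V) : Prop :=
  ∀ ⦃u v : V⦄, Γ.Adj u v → ∀ n : ℕ,
    {p : Γ.Walk u u | p.IsCycle ∧ s(u, v) ∈ p.edges ∧ p.length ≤ n}.Finite

/-- Gromov hyperbolicity (four-point condition) for the combinatorial metric of a graph. -/
def SimpleGraph.IsHyperbolic {V : Type*} (Γ : SimpleGraph V) : Prop :=
  ∃ δ : ℝ, 0 ≤ δ ∧ ∀ x y z w : V,
    (Γ.dist x y + Γ.dist z w : ℝ) ≤
      max ((Γ.dist x z + Γ.dist y w : ℕ) : ℝ) ((Γ.dist x w + Γ.dist y z : ℕ) : ℝ) + δ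

namespace SimpleGraph

variable {V : Type*} {Γ : SimpleGraph V}

def IsDeltaHyperbolic (Γ : SimpleGraph V) (δ : ℝ) : Prop :=
  ∀ x y z w : V, (Γ.dist x y + Γ.dist z w : ℝ) ≤
    max ((Γ.dist x z + Γ.dist y w : ℕ) : ℝ) ((Γ.dist x w + Γ.dist y z : ℕ) : ℝ) + δ

def IsGeodesicallyConvex (Γ : SimpleGraph V) (Y : Set V) : Prop :=
  ∀ u ∈ Y, ∀ w ∈ Y, ∀ p : Γ.Walk u w, p.length = Γ.dist u w → ∀ x ∈ p.support, x ∈ Y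

namespace Walk

variable {u v w x : V}

lemma dist_le_length_of_mem_support (p : Γ.Walk u v) (hw : w ∈ p.support) :
    Γ.dist w v ≤ p.length := by
  classical
  exact (dist_le _).trans (p.length_dropUntil_le_length hw)

lemma dist_lt_length_of_mem_support_tail (p : Γ.Walk u v) (hw : w ∈ p.support.tail) :
    Γ.dist w v < p.length := by
  cases p with
  | nil => simp at hw
  | cons _ p =>
    rw [support_cons, List.tail_cons] at hw
    exact (p.dist_le_length_of_mem_support hw).trans_lt (by simp)

lemma IsPath.append_of_disjoint {p : Γ.Walk u v} {q : Γ.Walk v w} (hp : p.IsPath)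
    (hq : q.IsPath) (hpq : p.support.Disjoint q.support.tail) : (p.append q).IsPath := by
  rw [isPath_def, support_append, List.nodup_append']
  exact ⟨hp.support_nodup, hq.support_nodup.sublist (List.tail_sublist _), hpq⟩

lemma IsPath.isCycle_cons_concat {p : Γ.Walk v w} (hp : p.IsPath) (hx : x ∉ p.support)
    (hvw : v ≠ w) (hxv : Γ.Adj x v) (hwx : Γ.Adj w x) : (cons hxv (p.concat hwx)).IsCycle := by
  refine (cons_isCycle_iff _ hxv).mpr ⟨hp.concat hx hwx, ?_⟩
  simp only [edges_concat, List.concat_eq_append, List.mem_append, List.mem_singleton]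
  rintro (he | he)
  · exact hx (p.fst_mem_support_of_mem_edges he)
  · exact hvw (Sym2.congr_right.mp (he.trans Sym2.eq_swap))

lemma exists_mem_support_dist_le (p : Γ.Walk u v) (k : ℕ) :
    ∃ m ∈ p.support, Γ.dist u m ≤ k ∧ Γ.dist m v ≤ p.length - k :=
  ⟨p.getVert k, p.getVert_mem_support k,
    (dist_le (p.take k)).trans ((p.take_length k).trans_le (min_le_left _ _)),
    (dist_le (p.drop k)).trans (p.drop_length k).le⟩

end Walk

lemma IsFine.finite_adj_exists_walk_not_mem_support (hfine : Γ.IsFine) (x y : V) (n : ℕ) :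
    {w | ∃ _ : Γ.Adj x w, ∃ q : Γ.Walk w y, x ∉ q.support ∧ q.length ≤ n}.Finite := by
  classical
  rcases Set.eq_empty_or_nonempty
    {w | ∃ _ : Γ.Adj x w, ∃ q : Γ.Walk w y, x ∉ q.support ∧ q.length ≤ n}
    with hempty | ⟨w₁, h₁, q₁, hxq₁, hq₁⟩
  · exact hempty ▸ Set.finite_empty
  refine (((hfine h₁ (2 * n + 2)).image Walk.snd).insert w₁).subset ?_
  rintro w ⟨h, q, hxq, hq⟩
  by_cases hw : w = w₁
  · exact Or.inl hw
  obtain ⟨r, hr, hxr, hrlen⟩ : ∃ r : Γ.Walk w w₁, r.IsPath ∧ x ∉ r.support ∧ r.length ≤ 2 * n := by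
    refine ⟨(q.append q₁.reverse).bypass, Walk.bypass_isPath _, fun hx => ?_, ?_⟩
    · have := (q.append q₁.reverse).support_bypass_subset_support hx
      rw [Walk.support_append, Walk.support_reverse, List.mem_append] at this
      exact this.elim hxq fun hx => hxq₁ (List.mem_reverse.mp (List.mem_of_mem_tail hx))
    · have := (q.append q₁.reverse).length_bypass_le_length
      rw [Walk.length_append, Walk.length_reverse] at this
      omega
  refine Or.inr ⟨Walk.cons h (r.concat h₁.symm), ⟨?_, ?_, ?_⟩, Walk.snd_cons _ _⟩
  · exact hr.isCycle_cons_concat hxr hw h h₁.symm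
  · simp [Walk.edges_concat, Sym2.eq_swap]
  · rw [Walk.length_cons, Walk.length_concat]
    omega

lemma IsFine.finite_setOf_isPath_length_le (hfine : Γ.IsFine) (n : ℕ) :
    ∀ x y : V, {p : Γ.Walk x y | p.IsPath ∧ p.length ≤ n}.Finite := by
  have hnil (x y : V) : {p : Γ.Walk x y | p.length = 0}.Subsingleton := by
    rintro (_ | _) hp (_ | _) hq <;> simp_all
  induction n with
  | zero => exact fun x y => (hnil x y).finite.subset fun p hp => Nat.le_zero.mp hp.2
  | succ n ih =>
    intro x y
    refine ((hnil x y).finite.union ((hfine.finite_adj_exists_walk_not_mem_support x y n).biUnion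
      fun w _ => Set.finite_iUnion fun h : Γ.Adj x w => (ih w y).image (Walk.cons h))).subset ?_
    rintro (_ | ⟨h, q⟩) ⟨hp, hlen⟩
    · exact Or.inl rfl
    · rw [Walk.cons_isPath_iff] at hp
      rw [Walk.length_cons, Nat.add_le_add_iff_right] at hlen
      exact Or.inr (Set.mem_biUnion ⟨h, q, hp.2, hlen⟩
        (Set.mem_iUnion.mpr ⟨h, q, ⟨hp.1, hlen⟩, rfl⟩))

lemma IsDeltaHyperbolic.dist_le_of_closest {δ : ℝ} (hδ : Γ.IsDeltaHyperbolic δ)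
    (hconn : Γ.Connected) {Y : Set V} (hY : Γ.IsGeodesicallyConvex Y) {v z₀ z : V} {D : ℕ}
    (hz₀ : z₀ ∈ Y) (hz : z ∈ Y) (hz₀v : Γ.dist z₀ v = D) (hzv : Γ.dist z v = D)
    (hmin : ∀ y ∈ Y, D ≤ Γ.dist y v) : (Γ.dist z₀ z : ℝ) ≤ 2 * δ + 1 := by
  obtain ⟨p, hp⟩ := hconn.exists_walk_length_eq_dist z₀ z
  set L := Γ.dist z₀ z
  obtain ⟨m, hm, hz₀m, hmz⟩ := p.exists_mem_support_dist_le (L / 2)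
  have hmax : max ((Γ.dist z₀ m + Γ.dist z v : ℕ) : ℝ) ((Γ.dist z₀ v + Γ.dist z m : ℕ) : ℝ) ≤
      ((L - L / 2 + D : ℕ) : ℝ) := by
    rw [dist_comm (u := z) (v := m)]
    exact max_le (by exact_mod_cast (by omega)) (by exact_mod_cast (by omega))
  have hfour := (hδ z₀ z m v).trans (add_le_add_left hmax δ)
  have hmv : (D : ℝ) ≤ Γ.dist m v := by exact_mod_cast hmin m (hY _ hz₀ _ hz p hp m hm)
  have hhalf : ((L - L / 2 : ℕ) : ℝ) = L - (L / 2 : ℕ) := Nat.cast_sub (Nat.div_le_self L 2)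
  have hL : (L : ℝ) ≤ 2 * (L / 2 : ℕ) + 1 := by exact_mod_cast (by omega : L ≤ 2 * (L / 2) + 1)
  push_cast [hhalf] at hfour
  linarith

end SimpleGraph

open SimpleGraph

theorem finitely_many_closest_points_general {V : Type*} (Γ : SimpleGraph V)
    (hconn : Γ.Connected) (hfine : Γ.IsFine) (hhyp : Γ.IsHyperbolic)
    (Y : Set V)
    (hYconv : ∀ u ∈ Y, ∀ w ∈ Y, ∀ p : Γ.Walk u w, p.length = Γ.dist u w →
      ∀ x ∈ p.support, x ∈ Y)
    (v : V) (D : ℕ) (hD : IsLeast {d : ℕ | ∃ z ∈ Y, Γ.dist z v = d} D) :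
    {z ∈ Y | Γ.dist z v = D}.Finite := by
  obtain ⟨δ, -, hδ : Γ.IsDeltaHyperbolic δ⟩ := hhyp
  obtain ⟨⟨z₀, hz₀, hz₀v⟩, hlb⟩ := hD
  have hmin : ∀ y ∈ Y, D ≤ Γ.dist y v := fun y hy => hlb ⟨y, hy, rfl⟩
  refine ((hfine.finite_setOf_isPath_length_le (⌊2 * δ + 1⌋₊ + D) z₀ v).biUnion
    fun r _ => r.support.finite_toSet).subset ?_
  rintro z ⟨hz, hzv⟩
  obtain ⟨p, hp, hplen⟩ := hconn.exists_path_of_dist z₀ z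
  obtain ⟨q, hq, hqlen⟩ := hconn.exists_path_of_dist z v
  have hpY : ∀ u ∈ p.support, u ∈ Y := hYconv _ hz₀ _ hz p hplen
  have hqY : ∀ u ∈ q.support.tail, u ∉ Y := fun u hu huY =>
    (hmin u huY).not_gt (hzv ▸ hqlen ▸ q.dist_lt_length_of_mem_support_tail hu)
  have hclose : Γ.dist z₀ z ≤ ⌊2 * δ + 1⌋₊ :=
    Nat.le_floor (hδ.dist_le_of_closest hconn hYconv hz₀ hz hz₀v hzv hmin)
  refine Set.mem_biUnion (x := p.append q)
    ⟨hp.append_of_disjoint hq fun u hu hu' => hqY u hu' (hpY u hu), ?_⟩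
    (Walk.support_subset_support_append_left _ _ p.end_mem_support)
  rw [Walk.length_append]
  omega

/-- In a fine hyperbolic graph, if `Y` is a connected subgraph (given by a convex set of
vertices `Y`, i.e. geodesics between vertices of `Y` stay in `Y`) and `v` is a vertex at
distance `D = min {d(z,v) : z ∈ Y}` from `Y`, then the set of vertices of `Y` realizing
this minimal distance is finite. -/
theorem finitely_many_closest_points {V : Type*} (Γ : SimpleGraph V)
    (hconn : Γ.Connected) (hfine : Γ.IsFine) (hhyp : Γ.IsHyperbolic)
    (Y : Set V) (hYconn : (Γ.induce Y).Connected)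
    (hYconv : ∀ u ∈ Y, ∀ w ∈ Y, ∀ p : Γ.Walk u w, p.length = Γ.dist u w →
      ∀ x ∈ p.support, x ∈ Y)
    (v : V) (D : ℕ) (hD : IsLeast {d : ℕ | ∃ z ∈ Y, Γ.dist z v = d} D) :
    {z ∈ Y | Γ.dist z v = D}.Finite :=
  finitely_many_closest_points_general Γ hconn hfine hhyp Y hYconv v D hD
end

section
/- Let a group G act acylindrically on a hyperbolic graph Γ, let H ≤ G act coboundedly on a quasi-convex subset W ⊆ Γ with quasi-isometrically embedded orbit, and let γ: ℝ → Γ be a bi-infinite geodesic converging to distinct boundary points p and q. If {gᵢW} is an infinite collection of distinct translates of W each containing an edge of γ, then only finitely many of the groups gᵢHgᵢ⁻¹ have p in their limit set, and only finitely many have q in their limit set. -/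
/-- The Gromov product of `x` and `y` based at `o`, for the graph metric. -/
noncomputable def gromovProd {V : Type*} (Γ : SimpleGraph V) (o x y : V) : ℝ :=
  ((Γ.dist o x : ℝ) + (Γ.dist o y : ℝ) - (Γ.dist x y : ℝ)) / 2

/-- Two sequences converge to the same point of the Gromov boundary: their Gromov
products go to infinity. -/
def ConvergeTogether {V : Type*} (Γ : SimpleGraph V) (o : V) (x y : ℕ → V) : Prop :=
  ∀ M : ℝ, ∃ N : ℕ, ∀ m ≥ N, ∀ n ≥ N, M ≤ gromovProd Γ o (x m) (y n)

/-- The boundary point determined by the sequence `s` lies in the limit set of the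
subset `H' ⊆ G`: some orbit sequence of `H'` converges together with `s`. -/
def InLimitSet {G V : Type*} [Group G] [MulAction G V] (Γ : SimpleGraph V) (o x₀ : V)
    (H' : Set G) (s : ℕ → V) : Prop :=
  ∃ h : ℕ → G, (∀ n, h n ∈ H') ∧ ConvergeTogether Γ o (fun n => h n • x₀) s

/-- `h` is a product of `n` elements of `S ∪ S⁻¹`. -/
def HasWordRep {G : Type*} [Group G] (S : Finset G) (h : G) (n : ℕ) : Prop :=
  ∃ l : List G, l.length = n ∧ (∀ x ∈ l, x ∈ S ∨ x⁻¹ ∈ S) ∧ l.prod = h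

/-!
If `p = γ(+∞)` lies in the limit set of `gᵢHgᵢ⁻¹`, then `p` is approached by points of the
quasi-convex translate `gᵢW`, which also contains a point `γ(m₀)` of `γ`.  Thin triangles with
vertices `γ(m₀)`, `γ(n)` and a point of `gᵢW` far out towards `p` put `γ(n)` within
`κ + 2δ` of `gᵢW` for every `n ≥ m₀`.  Infinitely many such `i` would give arbitrarily many
distinct cosets `gᵢH` whose translates `gᵢW` all come `(κ + 2δ)`-close to two points of `γ`
at distance `> D`, contradicting acylindricity along `H`.  The point `q` is the same statement
for the reversed geodesic.
-/

open scoped Pointwise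

namespace SimpleGraph

variable {V : Type*} {Γ : SimpleGraph V}

def IsHyperbolicWith (Γ : SimpleGraph V) (δ : ℝ) : Prop :=
  ∀ x y z w : V, (Γ.dist x y + Γ.dist z w : ℝ) ≤
    max ((Γ.dist x z + Γ.dist y w : ℕ) : ℝ) ((Γ.dist x w + Γ.dist y z : ℕ) : ℝ) + δ

def IsQuasiconvex (Γ : SimpleGraph V) (κ : ℕ) (U : Set V) : Prop :=
  ∀ u ∈ U, ∀ w ∈ U, ∀ p : Γ.Walk u w, p.length = Γ.dist u w →
    ∀ x ∈ p.support, ∃ y ∈ U, Γ.dist x y ≤ κ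

def IsGeodesicLine (Γ : SimpleGraph V) (γ : ℤ → V) : Prop :=
  ∀ m n : ℤ, Γ.dist (γ m) (γ n) = (m - n).natAbs

/-- The boundary point represented by `s` lies in the closure of `U`. -/
def IsApproachedBy (Γ : SimpleGraph V) (o : V) (U : Set V) (s : ℕ → V) : Prop :=
  ∀ M : ℝ, ∃ z ∈ U, ∃ N : ℕ, ∀ m ≥ N, M ≤ gromovProd Γ o z (s m)

lemma Connected.dist_triangle_real (hconn : Γ.Connected) (x y z : V) :
    (Γ.dist x z : ℝ) ≤ Γ.dist x y + Γ.dist y z := by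
  exact_mod_cast hconn.dist_triangle

lemma gromovProd_comm (o x y : V) : gromovProd Γ o x y = gromovProd Γ o y x := by
  unfold gromovProd; rw [dist_comm (u := x)]; ring

lemma Connected.gromovProd_le_dist_left (hconn : Γ.Connected) (o x y : V) :
    gromovProd Γ o x y ≤ Γ.dist o x := by
  have := hconn.dist_triangle_real o x y
  unfold gromovProd; linarith

lemma Connected.gromovProd_sub_dist_le_gromovProd_base (hconn : Γ.Connected) (o a x y : V) :
    gromovProd Γ o x y - Γ.dist o a ≤ gromovProd Γ a x y := by
  have := hconn.dist_triangle_real o a x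
  have := hconn.dist_triangle_real o a y
  unfold gromovProd; linarith

lemma Connected.gromovProd_sub_dist_le_gromovProd_left (hconn : Γ.Connected) (o x x' y : V) :
    gromovProd Γ o x y - Γ.dist x x' ≤ gromovProd Γ o x' y := by
  have := hconn.dist_triangle_real o x' x
  have := hconn.dist_triangle_real x' x y
  rw [dist_comm (u := x') (v := x)] at *
  unfold gromovProd; linarith

lemma IsHyperbolicWith.min_gromovProd_sub_le {δ : ℝ} (hδ : Γ.IsHyperbolicWith δ)
    (a x y z : V) :
    min (gromovProd Γ a x y) (gromovProd Γ a y z) - δ / 2 ≤ gromovProd Γ a x z := by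
  have h := hδ x z a y
  push_cast at h
  rw [dist_comm (u := z) (v := y), dist_comm (u := z) (v := a), dist_comm (u := x) (v := a)] at h
  have h₁ := min_le_left (gromovProd Γ a x y) (gromovProd Γ a y z)
  have h₂ := min_le_right (gromovProd Γ a x y) (gromovProd Γ a y z)
  unfold gromovProd at *
  rcases le_total (Γ.dist a x + Γ.dist y z : ℝ) (Γ.dist x y + Γ.dist a z) with hc | hc
  · rw [max_eq_right hc] at h; linarith
  · rw [max_eq_left hc] at h; linarith

lemma IsHyperbolicWith.dist_le_two_mul_sub_gromovProd (hconn : Γ.Connected) {δ : ℝ}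
    (hδ : Γ.IsHyperbolicWith δ) {a x z v : V} (hx : Γ.dist a x = Γ.dist a v)
    (hv : Γ.dist a v + Γ.dist v z = Γ.dist a z) :
    (Γ.dist x v : ℝ) ≤ 2 * (Γ.dist a x - gromovProd Γ a x z) + δ := by
  have hv' : (Γ.dist a v : ℝ) + Γ.dist v z = Γ.dist a z := by exact_mod_cast hv
  have hzv : gromovProd Γ a z v = Γ.dist a v := by
    unfold gromovProd; rw [dist_comm (u := z)]; linarith
  have hmin := hδ.min_gromovProd_sub_le a x z v
  rw [min_eq_left ((hconn.gromovProd_le_dist_left a x z).trans (by rw [hzv, hx]))] at hmin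
  unfold gromovProd at hmin ⊢; rw [hx] at hmin ⊢; linarith

lemma Walk.dist_getVert_of_length_eq_dist {u v : V} (p : Γ.Walk u v)
    (hp : p.length = Γ.dist u v) {t : ℕ} (ht : t ≤ p.length) :
    Γ.dist u (p.getVert t) = t ∧ Γ.dist u (p.getVert t) + Γ.dist (p.getVert t) v = Γ.dist u v := by
  have h₁ : Γ.dist u (p.getVert t) ≤ t := by simpa [ht] using dist_le (p.take t)
  have h₂ : Γ.dist (p.getVert t) v ≤ p.length - t := by simpa using dist_le (p.drop t)
  have h₃ := (p.take t).reachable.dist_triangle_left v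
  omega

lemma IsGeodesicLine.dist_eq_abs {γ : ℤ → V} (hγ : Γ.IsGeodesicLine γ) (m n : ℤ) :
    (Γ.dist (γ m) (γ n) : ℝ) = |(m : ℝ) - n| := by
  rw [hγ, Nat.cast_natAbs]; push_cast; rfl

lemma IsGeodesicLine.gromovProd_eq {γ : ℤ → V} (hγ : Γ.IsGeodesicLine γ) {i j k : ℤ}
    (hij : i ≤ j) (hjk : j ≤ k) : gromovProd Γ (γ i) (γ j) (γ k) = j - i := by
  have hij' : (i : ℝ) ≤ j := by exact_mod_cast hij
  have hjk' : (j : ℝ) ≤ k := by exact_mod_cast hjk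
  unfold gromovProd
  rw [hγ.dist_eq_abs, hγ.dist_eq_abs, hγ.dist_eq_abs, abs_of_nonpos (by linarith),
    abs_of_nonpos (by linarith), abs_of_nonpos (by linarith)]
  ring

lemma IsGeodesicLine.comp_neg {γ : ℤ → V} (hγ : Γ.IsGeodesicLine γ) :
    Γ.IsGeodesicLine (fun n => γ (-n)) := fun m n => by rw [hγ]; omega

section Action

variable {G : Type*} [Group G] [MulAction G V]

lemma Connected.dist_map_le {V' : Type*} {Γ' : SimpleGraph V'} (hconn : Γ.Connected)
    (f : Γ →g Γ') (x y : V) : Γ'.dist (f x) (f y) ≤ Γ.dist x y := by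
  obtain ⟨p, hp⟩ := hconn.exists_walk_length_eq_dist x y
  simpa [hp] using dist_le (p.map f)

lemma Connected.dist_smul (hconn : Γ.Connected)
    (hact : ∀ (g : G) (u v : V), Γ.Adj u v → Γ.Adj (g • u) (g • v)) (g : G) (x y : V) :
    Γ.dist (g • x) (g • y) = Γ.dist x y := by
  refine le_antisymm (hconn.dist_map_le ⟨(g • ·), hact g _ _⟩ x y) ?_
  simpa using hconn.dist_map_le ⟨(g⁻¹ • ·), hact g⁻¹ _ _⟩ (g • x) (g • y)

lemma IsQuasiconvex.smul (hconn : Γ.Connected)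
    (hact : ∀ (g : G) (u v : V), Γ.Adj u v → Γ.Adj (g • u) (g • v)) {κ : ℕ} {U : Set V}
    (hU : Γ.IsQuasiconvex κ U) (g : G) : Γ.IsQuasiconvex κ (g • U) := by
  rintro _ ⟨u, hu, rfl⟩ _ ⟨w, hw, rfl⟩ p hp x hx
  let q : Γ.Walk u w :=
    (p.map ⟨(g⁻¹ • ·), hact g⁻¹ _ _⟩).copy (inv_smul_smul g u) (inv_smul_smul g w)
  have hq : q.length = Γ.dist u w := by
    simp [q, hp, hconn.dist_smul hact]
  obtain ⟨y, hy, hxy⟩ := hU u hu w hw q hq (g⁻¹ • x) (by simpa [q] using hx)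
  exact ⟨g • y, Set.smul_mem_smul_set hy, by rwa [← hconn.dist_smul hact g, smul_inv_smul] at hxy⟩

end Action

lemma IsApproachedBy.exists_dist_le (hconn : Γ.Connected) {δ : ℝ} (hδ : Γ.IsHyperbolicWith δ)
    {κ : ℕ} {U : Set V} (hU : Γ.IsQuasiconvex κ U) {γ : ℤ → V} (hγ : Γ.IsGeodesicLine γ)
    {o : V} (happ : Γ.IsApproachedBy o U (fun m : ℕ => γ m)) {m₀ n : ℤ} (hm₀ : γ m₀ ∈ U)
    (hn : m₀ ≤ n) : ∃ u ∈ U, (Γ.dist (γ n) u : ℝ) ≤ κ + 2 * δ := by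
  obtain ⟨t, rfl⟩ : ∃ t : ℕ, n = m₀ + t := ⟨(n - m₀).toNat, by omega⟩
  obtain ⟨z, hzU, N, hN⟩ := happ (t + Γ.dist o (γ m₀))
  set m : ℕ := max N (m₀ + t).toNat
  have hm : m₀ + t ≤ m := by omega
  have hfar : (t : ℝ) ≤ gromovProd Γ (γ m₀) z (γ m) := by
    linarith [hN m (le_max_left _ _), hconn.gromovProd_sub_dist_le_gromovProd_base o (γ m₀) z (γ m)]
  have hray : gromovProd Γ (γ m₀) (γ (m₀ + t)) (γ m) = t := by
    simpa using hγ.gromovProd_eq (by omega : m₀ ≤ m₀ + t) hm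
  have hnear : (t : ℝ) - δ / 2 ≤ gromovProd Γ (γ m₀) (γ (m₀ + t)) z := by
    have := hδ.min_gromovProd_sub_le (γ m₀) (γ (m₀ + t)) (γ m) z
    rw [hray, gromovProd_comm _ (γ m)] at this
    linarith [le_min le_rfl hfar]
  obtain ⟨p, hp⟩ := hconn.exists_walk_length_eq_dist (γ m₀) z
  have ht : t ≤ p.length := by
    rw [hp]; exact_mod_cast hfar.trans (hconn.gromovProd_le_dist_left _ _ _)
  obtain ⟨hvt, hvgeo⟩ := p.dist_getVert_of_length_eq_dist hp ht
  have hthin := hδ.dist_le_two_mul_sub_gromovProd hconn (x := γ (m₀ + t))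
    (by rw [hvt, hγ]; omega) hvgeo
  rw [hγ, show (m₀ - (m₀ + t)).natAbs = t by omega] at hthin
  obtain ⟨u, hu, hvu⟩ := hU _ hm₀ _ hzU p hp _ (p.getVert_mem_support t)
  refine ⟨u, hu, ?_⟩
  have : (Γ.dist (p.getVert t) u : ℝ) ≤ κ := by exact_mod_cast hvu
  linarith [hconn.dist_triangle_real (γ (m₀ + t)) (p.getVert t) u]

end SimpleGraph

section Translates

variable {G V : Type*} [Group G] [MulAction G V] {Γ : SimpleGraph V} {H : Subgroup G} {W : Set V}

lemma inv_mul_notMem_of_smul_set_ne (hWinv : ∀ h ∈ H, ∀ x ∈ W, h • x ∈ W) {g g' : G}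
    (hne : g • W ≠ g' • W) : g⁻¹ * g' ∉ H := by
  intro hmem
  have hstab : ∀ k ∈ H, k • W = W := fun k hk =>
    (Set.smul_set_subset_iff.2 (hWinv k hk)).antisymm
      fun x hx => ⟨k⁻¹ • x, hWinv _ (inv_mem hk) _ hx, smul_inv_smul k x⟩
  apply hne
  calc g • W = g • ((g⁻¹ * g') • W) := by rw [hstab _ hmem]
    _ = g' • W := by rw [smul_smul, mul_inv_cancel_left]

lemma InLimitSet.isApproachedBy_smul (hconn : Γ.Connected)
    (hact : ∀ (g : G) (u v : V), Γ.Adj u v → Γ.Adj (g • u) (g • v)) {x₀ : V} (hx₀ : x₀ ∈ W)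
    (hWinv : ∀ h ∈ H, ∀ x ∈ W, h • x ∈ W) {o : V} {g : G} {s : ℕ → V}
    (hlim : InLimitSet Γ o x₀ ((fun x => g * x * g⁻¹) '' (H : Set G)) s) :
    Γ.IsApproachedBy o (g • W) s := by
  obtain ⟨k, hk, hconv⟩ := hlim
  intro M
  obtain ⟨N, hN⟩ := hconv (M + Γ.dist x₀ (g⁻¹ • x₀))
  obtain ⟨h, hh, hkN⟩ := hk N
  refine ⟨g • h • x₀, Set.smul_mem_smul_set (hWinv h hh x₀ hx₀), N, fun m hm => ?_⟩
  have hd : (Γ.dist (k N • x₀) (g • h • x₀) : ℝ) = Γ.dist x₀ (g⁻¹ • x₀) := by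
    rw [← hkN, mul_smul, mul_smul, hconn.dist_smul hact, hconn.dist_smul hact,
      SimpleGraph.dist_comm]
  linarith [hN N le_rfl m hm,
    hconn.gromovProd_sub_dist_le_gromovProd_left o (k N • x₀) (g • h • x₀) (s m)]

lemma finite_setOf_translate_near_tail {ε D N : ℕ}
    (hacyl : ∀ s : Finset G, (∀ g₁ ∈ s, ∀ g₂ ∈ s, g₁ ≠ g₂ → g₁⁻¹ * g₂ ∉ H) →
      (∃ x y : V, (∀ g ∈ s, ∃ w ∈ W, Γ.dist x (g • w) ≤ ε) ∧
        (∀ g ∈ s, ∃ w ∈ W, Γ.dist y (g • w) ≤ ε) ∧ D < Γ.dist x y) →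
      s.card ≤ N)
    {γ : ℤ → V} (hγ : Γ.IsGeodesicLine γ) {gseq : ℕ → G}
    (hcoset : ∀ i j, i ≠ j → (gseq i)⁻¹ * gseq j ∉ H) :
    {i | ∃ m₀ : ℤ, ∀ n ≥ m₀, ∃ w ∈ W, Γ.dist (γ n) (gseq i • w) ≤ ε}.Finite := by
  classical
  by_contra hinf
  obtain ⟨t, hts, htcard⟩ := Set.Infinite.exists_subset_card_eq hinf (N + 1)
  choose! m₀ hm₀ using fun i (hi : i ∈ t) => hts hi
  have hne : t.Nonempty := Finset.card_pos.1 (by omega)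
  set M := t.sup' hne m₀
  have hinj : Set.InjOn gseq t := fun i _ j _ hij => by_contra fun hne =>
    hcoset i j hne (by rw [hij, inv_mul_cancel]; exact H.one_mem)
  have hcard := hacyl (t.image gseq) ?_ ⟨γ M, γ (M + D + 1),
    Finset.forall_mem_image.2 fun i hi => hm₀ i hi _ (Finset.le_sup' m₀ hi),
    Finset.forall_mem_image.2 fun i hi => hm₀ i hi _ ((Finset.le_sup' m₀ hi).trans (by omega)),
    by rw [hγ]; omega⟩
  · rw [Finset.card_image_of_injOn hinj] at hcard; omega
  · simp only [Finset.mem_image]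
    rintro _ ⟨i, -, rfl⟩ _ ⟨j, -, rfl⟩ hij
    exact hcoset i j (by rintro rfl; exact hij rfl)

lemma finite_setOf_inLimitSet_conj (hconn : Γ.Connected) (hhyp : Γ.IsHyperbolic)
    (hact : ∀ (g : G) (u v : V), Γ.Adj u v → Γ.Adj (g • u) (g • v)) {x₀ : V} (hx₀ : x₀ ∈ W)
    (hWinv : ∀ h ∈ H, ∀ x ∈ W, h • x ∈ W) (hWqc : ∃ κ : ℕ, Γ.IsQuasiconvex κ W)
    (hacyl : ∀ ε : ℕ, ∃ D N : ℕ, ∀ s : Finset G,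
      (∀ g₁ ∈ s, ∀ g₂ ∈ s, g₁ ≠ g₂ → g₁⁻¹ * g₂ ∉ H) →
      (∃ x y : V, (∀ g ∈ s, ∃ w ∈ W, Γ.dist x (g • w) ≤ ε) ∧
        (∀ g ∈ s, ∃ w ∈ W, Γ.dist y (g • w) ≤ ε) ∧ D < Γ.dist x y) →
      s.card ≤ N)
    {γ : ℤ → V} (hγ : Γ.IsGeodesicLine γ) (o : V) {gseq : ℕ → G}
    (hdist : ∀ i j : ℕ, i ≠ j → gseq i • W ≠ gseq j • W)
    (hmeet : ∀ i : ℕ, ∃ n : ℤ, γ n ∈ gseq i • W) :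
    {i : ℕ | InLimitSet Γ o x₀ ((fun x => gseq i * x * (gseq i)⁻¹) '' (H : Set G))
      (fun n => γ n)}.Finite := by
  obtain ⟨δ, -, hδ⟩ := hhyp
  obtain ⟨κ, hκ⟩ := hWqc
  obtain ⟨D, N, hDN⟩ := hacyl (κ + ⌈2 * δ⌉₊)
  refine (finite_setOf_translate_near_tail hDN hγ fun i j hij =>
    inv_mul_notMem_of_smul_set_ne hWinv (hdist i j hij)).subset fun i hi => ?_
  obtain ⟨m₀, hm₀⟩ := hmeet i
  refine ⟨m₀, fun n hn => ?_⟩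
  obtain ⟨_, ⟨w, hw, rfl⟩, hnw⟩ := (hi.isApproachedBy_smul hconn hact hx₀ hWinv).exists_dist_le
    hconn hδ (hκ.smul hconn hact _) hγ hm₀ hn
  have := Nat.le_ceil (2 * δ)
  exact ⟨w, hw, by exact_mod_cast (by push_cast; linarith :
    (Γ.dist (γ n) (gseq i • w) : ℝ) ≤ (κ + ⌈2 * δ⌉₊ : ℕ))⟩

end Translates

theorem finitely_many_translates_with_limit_point_general {G V : Type*} [Group G] [MulAction G V]
    (Γ : SimpleGraph V) (hconn : Γ.Connected) (hhyp : Γ.IsHyperbolic)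
    (hact : ∀ (g : G) (u v : V), Γ.Adj u v → Γ.Adj (g • u) (g • v))
    (H : Subgroup G) (W : Set V) (x₀ : V) (hx₀ : x₀ ∈ W)
    (hWinv : ∀ h ∈ H, ∀ x ∈ W, h • x ∈ W)
    (hWqc : ∃ κ : ℕ, ∀ u ∈ W, ∀ w ∈ W, ∀ p : Γ.Walk u w, p.length = Γ.dist u w →
      ∀ x ∈ p.support, ∃ y ∈ W, Γ.dist x y ≤ κ)
    (hacyl : ∀ ε : ℕ, ∃ D N : ℕ, ∀ s : Finset G,
      (∀ g₁ ∈ s, ∀ g₂ ∈ s, g₁ ≠ g₂ → g₁⁻¹ * g₂ ∉ H) →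
      (∃ x y : V, (∀ g ∈ s, ∃ w ∈ W, Γ.dist x (g • w) ≤ ε) ∧
        (∀ g ∈ s, ∃ w ∈ W, Γ.dist y (g • w) ≤ ε) ∧ D < Γ.dist x y) →
      s.card ≤ N)
    (γ : ℤ → V) (hγ : ∀ m n : ℤ, Γ.dist (γ m) (γ n) = (m - n).natAbs)
    (o : V)
    (gseq : ℕ → G)
    (hdist : ∀ i j : ℕ, i ≠ j →
      (fun x => gseq i • x) '' W ≠ (fun x => gseq j • x) '' W)
    (hedge : ∀ i : ℕ, ∃ n : ℤ, γ n ∈ (fun x => gseq i • x) '' W ∧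
      γ (n + 1) ∈ (fun x => gseq i • x) '' W) :
    {i : ℕ | InLimitSet Γ o x₀ ((fun x => gseq i * x * (gseq i)⁻¹) '' (H : Set G))
      (fun n => γ n)}.Finite ∧
    {i : ℕ | InLimitSet Γ o x₀ ((fun x => gseq i * x * (gseq i)⁻¹) '' (H : Set G))
      (fun n => γ (-(n : ℤ)))}.Finite :=
  ⟨finite_setOf_inLimitSet_conj hconn hhyp hact hx₀ hWinv hWqc hacyl hγ o hdist
      fun i => (hedge i).imp fun _ h => h.1,
    finite_setOf_inLimitSet_conj hconn hhyp hact hx₀ hWinv hWqc hacyl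
      (SimpleGraph.IsGeodesicLine.comp_neg hγ) o hdist
      fun i => (hedge i).elim fun n h => ⟨-n, by simpa using h.1⟩⟩

/-- **Acylindricity bounds limit sets of skewering translates.** Let `G` act
acylindrically along `H` (in the sense of Abbott–Manning) on a hyperbolic graph `Γ`,
where `H ≤ G` acts coboundedly on a quasi-convex subset `W` with quasi-isometrically
embedded orbit.  Let `γ : ℤ → Γ` be a bi-infinite geodesic converging to distinct
boundary points `p = γ(+∞)` and `q = γ(-∞)`.  If `(gᵢ • W)` is an infinite collection
of distinct translates of `W`, each containing an edge of `γ`, then only finitely many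
of the conjugates `gᵢHgᵢ⁻¹` have `p` in their limit set, and only finitely many have
`q` in their limit set. -/
theorem finitely_many_translates_with_limit_point {G V : Type*} [Group G] [MulAction G V]
    (Γ : SimpleGraph V) (hconn : Γ.Connected) (hhyp : Γ.IsHyperbolic)
    (hact : ∀ (g : G) (u v : V), Γ.Adj u v → Γ.Adj (g • u) (g • v))
    (H : Subgroup G) (W : Set V) (x₀ : V) (hx₀ : x₀ ∈ W)
    (hWinv : ∀ h ∈ H, ∀ x ∈ W, h • x ∈ W)
    (hWcobdd : ∃ C : ℕ, ∀ x ∈ W, ∃ h ∈ H, Γ.dist x (h • x₀) ≤ C)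
    (hWqc : ∃ κ : ℕ, ∀ u ∈ W, ∀ w ∈ W, ∀ p : Γ.Walk u w, p.length = Γ.dist u w →
      ∀ x ∈ p.support, ∃ y ∈ W, Γ.dist x y ≤ κ)
    (hqie : ∃ S : Finset G, (↑S : Set G) ⊆ (H : Set G) ∧
      Subgroup.closure (↑S : Set G) = H ∧ ∃ a b : ℝ, 0 < a ∧ 0 ≤ b ∧
        (∀ h ∈ H, ∀ n : ℕ, HasWordRep S h n → (Γ.dist x₀ (h • x₀) : ℝ) ≤ a * n + b) ∧
        (∀ h ∈ H, ∃ n : ℕ, HasWordRep S h n ∧ (n : ℝ) ≤ a * (Γ.dist x₀ (h • x₀)) + b))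
    (hacyl : ∀ ε : ℕ, ∃ D N : ℕ, ∀ s : Finset G,
      (∀ g₁ ∈ s, ∀ g₂ ∈ s, g₁ ≠ g₂ → g₁⁻¹ * g₂ ∉ H) →
      (∃ x y : V, (∀ g ∈ s, ∃ w ∈ W, Γ.dist x (g • w) ≤ ε) ∧
        (∀ g ∈ s, ∃ w ∈ W, Γ.dist y (g • w) ≤ ε) ∧ D < Γ.dist x y) →
      s.card ≤ N)
    (γ : ℤ → V) (hγ : ∀ m n : ℤ, Γ.dist (γ m) (γ n) = (m - n).natAbs)
    (o : V)
    (hpq : ¬ ConvergeTogether Γ o (fun n => γ n) (fun n => γ (-(n : ℤ))))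
    (gseq : ℕ → G)
    (hdist : ∀ i j : ℕ, i ≠ j →
      (fun x => gseq i • x) '' W ≠ (fun x => gseq j • x) '' W)
    (hedge : ∀ i : ℕ, ∃ n : ℤ, γ n ∈ (fun x => gseq i • x) '' W ∧
      γ (n + 1) ∈ (fun x => gseq i • x) '' W) :
    {i : ℕ | InLimitSet Γ o x₀ ((fun x => gseq i * x * (gseq i)⁻¹) '' (H : Set G))
      (fun n => γ n)}.Finite ∧
    {i : ℕ | InLimitSet Γ o x₀ ((fun x => gseq i * x * (gseq i)⁻¹) '' (H : Set G))
      (fun n => γ (-(n : ℤ)))}.Finite :=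
  finitely_many_translates_with_limit_point_general Γ hconn hhyp hact H W x₀ hx₀ hWinv hWqc hacyl γ
    hγ o gseq hdist hedge
end
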